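/- In any execution trace of the onboarding protocol, if a registration-success event for a device occurs at time point j, then there exists an earlier time point i < j at which a validation event (checking the device's signed token and nonce) occurred for that same device. -/

import Mathlib

/-- Protocol events: `validate d t n` checks the device `d`'s signed token `t` and
nonce `n`; `registrationSuccess d` signals successful registration of device `d`. -/
inductive Event where
  | validate (deviceID token nonce : ℕ)
  | registrationSuccess (deviceID : ℕ)
deriving DecidableEq

/-- Traces generated by the protocol's transition rules: a trace is extended one event
at a time, and a `registrationSuccess d` event may only be emitted in a state reachable
after some `validate d t n` event already occurred in the trace. -/
inductive ValidTrace : List Event → Prop where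
  | nil : ValidTrace []
  | validate (tr : List Event) (d t n : ℕ) (h : ValidTrace tr) :
      ValidTrace (tr ++ [Event.validate d t n])
  | registrationSuccess (tr : List Event) (d : ℕ) (h : ValidTrace tr)
      (hguard : ∃ t n, Event.validate d t n ∈ tr) :
      ValidTrace (tr ++ [Event.registrationSuccess d])

/-! Valid traces are closed under prefixes, so the prefix of a trace ending with the
registration event at position `j` is itself valid. Its last step can only be the
registration rule, whose guard provides a validation among the first `j` events. -/

theorem List.exists_lt_getElem?_eq_of_mem_take {α : Type*} {l : List α} {a : α} {j : ℕ}
    (h : a ∈ l.take j) : ∃ i < j, l[i]? = some a := by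
  obtain ⟨i, hi⟩ := List.mem_iff_getElem?.mp h
  have hij : i < j := (List.getElem?_eq_some_iff.mp hi).1.trans_le (List.length_take_le j l)
  exact ⟨i, hij, by rwa [List.getElem?_take_of_lt hij] at hi⟩

namespace ValidTrace

theorem of_prefix {tr pre : List Event} (htr : ValidTrace tr) (hpre : pre <+: tr) :
    ValidTrace pre := by
  induction htr with
  | nil => exact List.prefix_nil.mp hpre ▸ .nil
  | validate tr d t n h ih =>
    rcases List.prefix_concat_iff.mp hpre with rfl | hpre
    · exact .validate tr d t n h
    · exact ih hpre
  | registrationSuccess tr d h hguard ih =>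
    rcases List.prefix_concat_iff.mp hpre with rfl | hpre
    · exact .registrationSuccess tr d h hguard
    · exact ih hpre

theorem exists_validate_of_append_registrationSuccess {tr : List Event} {d : ℕ}
    (h : ValidTrace (tr ++ [Event.registrationSuccess d])) :
    ∃ t n, Event.validate d t n ∈ tr := by
  generalize hext : tr ++ [Event.registrationSuccess d] = ext at h
  cases h with
  | nil => simp at hext
  | validate _ _ _ _ _ => simp [List.append_singleton_inj] at hext
  | registrationSuccess _ _ _ hguard =>
    obtain ⟨rfl, ⟨⟩⟩ := List.append_singleton_inj.mp hext
    exact hguard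

end ValidTrace

/-- **Authentication.** In any execution trace of the onboarding protocol, if a
registration-success event for a device occurs at time point `j`, then there is an
earlier time point `i < j` at which a validation event (checking the device's signed
token and nonce) occurred for that same device. -/
theorem registration_requires_prior_validation
    (tr : List Event) (htr : ValidTrace tr) (d : ℕ) (j : ℕ)
    (hj : tr[j]? = some (Event.registrationSuccess d)) :
    ∃ i t n, i < j ∧ tr[i]? = some (Event.validate d t n) := by
  have hprefix : tr.take j ++ [Event.registrationSuccess d] <+: tr := by
    rw [← Option.toList_some, ← hj, ← List.take_add_one]
    exact List.take_prefix _ _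
  obtain ⟨t, n, hmem⟩ :=
    (htr.of_prefix hprefix).exists_validate_of_append_registrationSuccess
  obtain ⟨i, hij, hi⟩ := List.exists_lt_getElem?_eq_of_mem_take hmem
  exact ⟨i, t, n, hij, hi⟩
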